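/- arXiv:1407.7204 — 2 statements merged into one kernel-verified Lean document; each statement's English description precedes it below -/
import Mathlib

section
/- Let a ∈ A = F_q[T] have positive degree, K a finite separable extension of k = F_q(T), m ∈ K, and let L be the splitting field over K of C_a(x) − m. Let λ_a generate Λ_a and let h ∈ L satisfy C_a(h) = m. Then L = K(λ_a, h), and the map Ψ : Gal(L/K) → GL_2(A/aA) sending ψ to the matrix [[b_ψ, u_ψ],[0,1]], where ψ(λ_a) = C_{b_ψ}(λ_a) with b_ψ ∈ (A/aA)^× and ψ(h) = C_{u_ψ}(λ_a) + h with u_ψ ∈ A/aA, is a well-defined injective group homomorphism. -/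
set_option maxHeartbeats 1000000
set_option synthInstance.maxHeartbeats 1000000

open Polynomial IsDedekindDomain

/-- The Carlitz module, viewed as the family of additive polynomials
`C_a(x) ∈ k[x]` for `a ∈ A = F_q[T]`, where `k = F_q(T)`:  it is the unique
`F_q`-algebra homomorphism from `A` into the twisted polynomial ring with
`C_T(x) = T x + x^q`. -/
structure IsCarlitz (Fq : Type) [Field Fq] [Fintype Fq]
    (C : Polynomial Fq → Polynomial (RatFunc Fq)) : Prop where
  carlitz_add : ∀ a b, C (a + b) = C a + C b
  carlitz_mul : ∀ a b, C (a * b) = (C a).comp (C b)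
  carlitz_const : ∀ c : Fq, C (Polynomial.C c) =
    Polynomial.C (algebraMap (Polynomial Fq) (RatFunc Fq) (Polynomial.C c)) * X
  carlitz_X : C X = Polynomial.C (algebraMap (Polynomial Fq) (RatFunc Fq) X) * X
      + X ^ Fintype.card Fq

/-- `lam` is a generator of the cyclic `A`-module `Λ_a` of `a`-torsion points of
the Carlitz module inside the algebraic closure of `k = F_q(T)`. -/
def IsCarlitzGenerator (Fq : Type) [Field Fq] [Fintype Fq]
    (C : Polynomial Fq → Polynomial (RatFunc Fq)) (a : Polynomial Fq)
    (lam : AlgebraicClosure (RatFunc Fq)) : Prop :=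
  aeval lam (C a) = 0 ∧
    ∀ μ : AlgebraicClosure (RatFunc Fq), aeval μ (C a) = 0 →
      ∃ b : Polynomial Fq, μ = aeval lam (C b)

/-- The function-field Euler totient: the number of nonzero polynomials of
degree less than `deg a` that are coprime to `a`. -/
noncomputable def carlitzPhi (Fq : Type) [Field Fq] [Fintype Fq] (a : Polynomial Fq) : ℕ :=
  Nat.card {b : Polynomial Fq // b ≠ 0 ∧ b.degree < a.degree ∧ IsCoprime a b}

section Density

variable {R : Type} [CommRing R] [IsDedekindDomain R]

/-- The norm of a prime: the cardinality of its residue field. -/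
noncomputable def primeNorm (v : HeightOneSpectrum R) : ℕ :=
  Nat.card (R ⧸ v.asIdeal)

noncomputable def dirichletSum (H : Set (HeightOneSpectrum R)) (s : ℝ) : ℝ :=
  ∑' v : H, ((primeNorm (v : HeightOneSpectrum R) : ℝ) ^ (-s) : ℝ)

/-- `H` has Dirichlet density `d`. -/
def HasDirichletDensity (H : Set (HeightOneSpectrum R)) (d : ℝ) : Prop :=
  Filter.Tendsto (fun s => dirichletSum H s / dirichletSum (Set.univ : Set (HeightOneSpectrum R)) s)
    (nhdsWithin 1 (Set.Ioi (1 : ℝ))) (nhds d)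

end Density

section Primes

variable {A K L : Type} [CommRing A] [Field K] [Field L] [Algebra A K] [Algebra A L]
  [Algebra K L] [IsScalarTower A K L]

/-- An element `x` of the big field lies in the prime `B` of the subring `T`. -/
def memPrime {T : Subalgebra A L} [IsDedekindDomain T]
    (B : HeightOneSpectrum T) (x : L) : Prop :=
  ∃ y : T, (y : L) = x ∧ y ∈ B.asIdeal

/-- The natural map between integral closures of `A` in `K ⊆ L`. -/
noncomputable def clHom (A K L : Type) [CommRing A] [Field K] [Field L] [Algebra A K]
    [Algebra A L] [Algebra K L] [IsScalarTower A K L] :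
    integralClosure A K →+* integralClosure A L where
  toFun x := ⟨algebraMap K L x,
    show IsIntegral A _ from (IsIntegral.map (IsScalarTower.toAlgHom A K L) x.2)⟩
  map_one' := by ext; simp
  map_mul' x y := by ext; simp
  map_zero' := by ext; simp
  map_add' x y := by ext; simp

/-- The prime `B` of the integral closure of `A` in `L` lies above the prime `v`
of the integral closure of `A` in `K`. -/
def primeLiesOver [IsDedekindDomain (integralClosure A K)]
    [IsDedekindDomain (integralClosure A L)]
    (B : HeightOneSpectrum (integralClosure A L))
    (v : HeightOneSpectrum (integralClosure A K)) : Prop :=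
  ∀ x : integralClosure A K, x ∈ v.asIdeal ↔ memPrime B (algebraMap K L x)

/-- The prime `v` of `K` is unramified in `L`: the ideal it generates in the
integral closure of `A` in `L` is radical (a product of distinct primes). -/
def UnramifiedIn [IsDedekindDomain (integralClosure A K)]
    (v : HeightOneSpectrum (integralClosure A K)) : Prop :=
  (Ideal.map (clHom A K L) v.asIdeal).IsRadical

/-- `ψ` is the Frobenius automorphism `(B, L/K)` at the prime `B` lying over `v`. -/
def IsFrobeniusAt [IsDedekindDomain (integralClosure A K)]
    [IsDedekindDomain (integralClosure A L)]
    (ψ : L ≃ₐ[K] L)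
    (v : HeightOneSpectrum (integralClosure A K))
    (B : HeightOneSpectrum (integralClosure A L)) : Prop :=
  (∀ x : L, memPrime B x → memPrime B (ψ x)) ∧
    ∀ x : integralClosure A L, memPrime B (ψ (x : L) - (x : L) ^ primeNorm v)

end Primes

set_option linter.unusedSectionVars false

namespace IsCarlitz

variable {Fq : Type} [Field Fq] [Fintype Fq] {C : Polynomial Fq → Polynomial (RatFunc Fq)}
  (hC : IsCarlitz Fq C)
include hC

theorem zero : C 0 = 0 := by
  have h := hC.carlitz_add 0 0
  rw [add_zero] at h
  exact (left_eq_add.mp h)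

theorem one : C 1 = X := by
  have h := hC.carlitz_const 1
  simpa using h

theorem sum {ι : Type*} (s : Finset ι) (f : ι → Polynomial Fq) :
    C (∑ i ∈ s, f i) = ∑ i ∈ s, C (f i) :=
  map_sum (AddMonoidHom.mk' C hC.carlitz_add) f s

theorem Xpow_zero : C (X ^ 0) = X := by rw [pow_zero, hC.one]

theorem Xpow_succ (n : ℕ) : C (X ^ (n + 1)) = (C X).comp (C (X ^ n)) := by
  rw [pow_succ', hC.carlitz_mul]

omit hC in
theorem algX_ne : (algebraMap (Polynomial Fq) (RatFunc Fq)) (X : Polynomial Fq) ≠ 0 := by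
  simpa using (map_ne_zero_iff _ (IsFractionRing.injective (Polynomial Fq) (RatFunc Fq))).mpr
    (X_ne_zero : (X : Polynomial Fq) ≠ 0)

omit hC in
theorem degree_lt_aux :
    degree (Polynomial.C (algebraMap (Polynomial Fq) (RatFunc Fq) X) * X)
      < (Fintype.card Fq : WithBot ℕ) := by
  refine lt_of_le_of_lt (degree_mul_le _ _) ?_
  refine lt_of_le_of_lt (add_le_add degree_C_le degree_X_le) ?_
  rw [zero_add]
  exact_mod_cast (Fintype.one_lt_card : 1 < Fintype.card Fq)

theorem monic_CX : (C X).Monic := by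
  rw [hC.carlitz_X, add_comm]
  exact monic_X_pow_add degree_lt_aux

theorem degree_CX : (C X).degree = (Fintype.card Fq : WithBot ℕ) := by
  rw [hC.carlitz_X, add_comm, degree_add_eq_left_of_degree_lt (by
    rw [degree_X_pow]; exact degree_lt_aux), degree_X_pow]

theorem natDegree_CX : (C X).natDegree = Fintype.card Fq :=
  natDegree_eq_of_degree_eq_some hC.degree_CX

theorem monic_Xpow (n : ℕ) :
    (C (X ^ n)).Monic ∧ (C (X ^ n)).natDegree = Fintype.card Fq ^ n := by
  induction n with
  | zero =>
    rw [hC.Xpow_zero]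
    exact ⟨monic_X, by simp⟩
  | succ n ih =>
    rw [hC.Xpow_succ]
    have hne : (C (X ^ n)).natDegree ≠ 0 := by
      rw [ih.2]
      exact (pow_pos (lt_of_lt_of_le one_pos Fintype.one_lt_card.le) n).ne'
    constructor
    · exact (hC.monic_CX).comp ih.1 hne
    · rw [natDegree_comp, ih.2, hC.natDegree_CX, pow_succ']

theorem eq_sum (b : Polynomial Fq) :
    C b = ∑ i ∈ Finset.range (b.natDegree + 1),
      Polynomial.C (algebraMap (Polynomial Fq) (RatFunc Fq) (Polynomial.C (b.coeff i)))
        * C (X ^ i) := by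
  conv_lhs => rw [Polynomial.as_sum_range' b (b.natDegree + 1) (lt_add_one _), hC.sum]
  refine Finset.sum_congr rfl fun i _ => ?_
  rw [← Polynomial.C_mul_X_pow_eq_monomial, hC.carlitz_mul, hC.carlitz_const]
  simp

theorem natDegree_le (b : Polynomial Fq) :
    (C b).natDegree ≤ Fintype.card Fq ^ b.natDegree := by
  rw [hC.eq_sum b]
  apply natDegree_sum_le_of_forall_le
  intro i hi
  refine (natDegree_C_mul_le _ _).trans ?_
  rw [(hC.monic_Xpow i).2]
  exact Nat.pow_le_pow_right (lt_of_lt_of_le one_pos Fintype.one_lt_card.le)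
    (Nat.lt_succ_iff.mp (Finset.mem_range.mp hi))

theorem coeff_top (b : Polynomial Fq) :
    (C b).coeff (Fintype.card Fq ^ b.natDegree)
      = algebraMap (Polynomial Fq) (RatFunc Fq) (Polynomial.C b.leadingCoeff) := by
  rw [hC.eq_sum b, finset_sum_coeff,
    Finset.sum_eq_single b.natDegree (fun i hi hne => ?_) (fun hni => ?_)]
  · rw [coeff_C_mul, ← (hC.monic_Xpow b.natDegree).2,
      (hC.monic_Xpow b.natDegree).1.coeff_natDegree, mul_one]
    rfl
  · have h0 : (C (X ^ i)).coeff (Fintype.card Fq ^ b.natDegree) = 0 := by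
      apply coeff_eq_zero_of_natDegree_lt
      rw [(hC.monic_Xpow i).2]
      exact Nat.pow_lt_pow_right Fintype.one_lt_card
        (lt_of_le_of_ne (Nat.lt_succ_iff.mp (Finset.mem_range.mp hi)) hne)
    rw [coeff_C_mul, h0, mul_zero]
  · exact absurd (Finset.self_mem_range_succ b.natDegree) hni

theorem coeff_top_ne {b : Polynomial Fq} (hb : b ≠ 0) :
    (C b).coeff (Fintype.card Fq ^ b.natDegree) ≠ 0 := by
  rw [hC.coeff_top]
  exact (map_ne_zero_iff _ (IsFractionRing.injective (Polynomial Fq) (RatFunc Fq))).mpr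
    (Polynomial.C_ne_zero.mpr (leadingCoeff_ne_zero.mpr hb))

theorem natDegree_eq {b : Polynomial Fq} (hb : b ≠ 0) :
    (C b).natDegree = Fintype.card Fq ^ b.natDegree :=
  le_antisymm (hC.natDegree_le b) (le_natDegree_of_ne_zero (hC.coeff_top_ne hb))

theorem C_ne_zero {b : Polynomial Fq} (hb : b ≠ 0) : C b ≠ 0 := fun h =>
  hC.coeff_top_ne hb (by rw [h, Polynomial.coeff_zero])

omit hC in
theorem card_cast_zero : ((Fintype.card Fq : ℕ) : RatFunc Fq) = 0 := by
  let g : Fq →+* RatFunc Fq :=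
    (algebraMap (Polynomial Fq) (RatFunc Fq)).comp (Polynomial.C : Fq →+* Polynomial Fq)
  calc ((Fintype.card Fq : ℕ) : RatFunc Fq)
      = g ((Fintype.card Fq : ℕ) : Fq) := (map_natCast g _).symm
    _ = g 0 := by rw [FiniteField.cast_card_eq_zero]
    _ = 0 := map_zero g

theorem derivative_CX :
    derivative (C X) = Polynomial.C (algebraMap (Polynomial Fq) (RatFunc Fq) X) := by
  rw [hC.carlitz_X, derivative_add, derivative_C_mul, derivative_X, derivative_X_pow,
    card_cast_zero]
  simp

theorem derivative_Xpow (n : ℕ) :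
    derivative (C (X ^ n)) = Polynomial.C (algebraMap (Polynomial Fq) (RatFunc Fq) X ^ n) := by
  induction n with
  | zero => rw [hC.Xpow_zero]; simp
  | succ n ih =>
    rw [hC.Xpow_succ, derivative_comp, hC.derivative_CX, ih]
    simp [pow_succ, mul_comm]

theorem derivative_eq (b : Polynomial Fq) :
    derivative (C b) = Polynomial.C (algebraMap (Polynomial Fq) (RatFunc Fq) b) := by
  calc derivative (C b)
      = ∑ i ∈ Finset.range (b.natDegree + 1),
          Polynomial.C (algebraMap (Polynomial Fq) (RatFunc Fq)
            (Polynomial.C (b.coeff i) * X ^ i)) := by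
        rw [hC.eq_sum b, derivative_sum]
        refine Finset.sum_congr rfl fun i _ => ?_
        rw [derivative_C_mul, hC.derivative_Xpow, ← Polynomial.C_mul, ← map_pow, ← map_mul]
    _ = Polynomial.C (algebraMap (Polynomial Fq) (RatFunc Fq) b) := by
        rw [← map_sum (Polynomial.C : RatFunc Fq →+* Polynomial (RatFunc Fq)),
          ← map_sum (algebraMap (Polynomial Fq) (RatFunc Fq))]
        congr 1
        conv_rhs => rw [Polynomial.as_sum_range' b (b.natDegree + 1) (lt_add_one _)]
        congr 1
        exact Finset.sum_congr rfl fun i _ => by rw [Polynomial.C_mul_X_pow_eq_monomial]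

theorem separable_sub {b : Polynomial Fq} (hb : b ≠ 0) (r : RatFunc Fq) :
    (C b - Polynomial.C r).Separable := by
  have hd : derivative (C b - Polynomial.C r)
      = Polynomial.C (algebraMap (Polynomial Fq) (RatFunc Fq) b) := by
    rw [derivative_sub, derivative_C, sub_zero, hC.derivative_eq]
  have hu : algebraMap (Polynomial Fq) (RatFunc Fq) b ≠ 0 :=
    (map_ne_zero_iff _ (IsFractionRing.injective _ _)).mpr hb
  refine ⟨0, Polynomial.C ((algebraMap (Polynomial Fq) (RatFunc Fq) b)⁻¹), ?_⟩
  rw [hd, zero_mul, zero_add, ← Polynomial.C_mul, inv_mul_cancel₀ hu, Polynomial.C_1]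

theorem separable {b : Polynomial Fq} (hb : b ≠ 0) : (C b).Separable := by
  simpa using hC.separable_sub hb 0

omit hC in
theorem frob (x y : AlgebraicClosure (RatFunc Fq)) :
    (x + y) ^ Fintype.card Fq = x ^ Fintype.card Fq + y ^ Fintype.card Fq := by
  let p := ringChar Fq
  haveI : CharP Fq p := ringChar.charP Fq
  haveI : Fact p.Prime := ⟨CharP.char_is_prime Fq p⟩
  obtain ⟨n, -, hcard⟩ := FiniteField.card Fq p
  let g : Fq →+* AlgebraicClosure (RatFunc Fq) :=
    (algebraMap (RatFunc Fq) _).comp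
      ((algebraMap (Polynomial Fq) (RatFunc Fq)).comp (Polynomial.C : Fq →+* Polynomial Fq))
  haveI : CharP (AlgebraicClosure (RatFunc Fq)) p := charP_of_injective_ringHom g.injective p
  rw [hcard]
  exact add_pow_char_pow x y p n

theorem aeval_zero_CX : aeval (0 : AlgebraicClosure (RatFunc Fq)) (C X) = 0 := by
  rw [hC.carlitz_X]
  simp [zero_pow (Fintype.card_ne_zero : Fintype.card Fq ≠ 0)]

theorem aeval_add_CX (x y : AlgebraicClosure (RatFunc Fq)) :
    aeval (x + y) (C X) = aeval x (C X) + aeval y (C X) := by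
  rw [hC.carlitz_X]
  simp only [map_add, map_mul, aeval_C, aeval_X, map_pow]
  rw [frob x y]
  ring

theorem aeval_zero_Xpow (n : ℕ) :
    aeval (0 : AlgebraicClosure (RatFunc Fq)) (C (X ^ n)) = 0 := by
  induction n with
  | zero => rw [hC.Xpow_zero]; simp
  | succ n ih => rw [hC.Xpow_succ, aeval_comp, ih, hC.aeval_zero_CX]

theorem aeval_add_Xpow (n : ℕ) (x y : AlgebraicClosure (RatFunc Fq)) :
    aeval (x + y) (C (X ^ n)) = aeval x (C (X ^ n)) + aeval y (C (X ^ n)) := by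
  induction n with
  | zero => rw [hC.Xpow_zero]; simp
  | succ n ih => rw [hC.Xpow_succ, aeval_comp, ih, hC.aeval_add_CX, aeval_comp, aeval_comp]

theorem aeval_add (b : Polynomial Fq) (x y : AlgebraicClosure (RatFunc Fq)) :
    aeval (x + y) (C b) = aeval x (C b) + aeval y (C b) := by
  rw [hC.eq_sum b]
  simp only [map_sum, map_mul, aeval_C]
  rw [← Finset.sum_add_distrib]
  exact Finset.sum_congr rfl fun i _ => by rw [hC.aeval_add_Xpow, mul_add]

theorem aeval_zero' (b : Polynomial Fq) :
    aeval (0 : AlgebraicClosure (RatFunc Fq)) (C b) = 0 := by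
  rw [hC.eq_sum b]
  simp only [map_sum, map_mul, aeval_C]
  refine Finset.sum_eq_zero fun i _ => by rw [hC.aeval_zero_Xpow, mul_zero]

theorem aeval_sub (b : Polynomial Fq) (x y : AlgebraicClosure (RatFunc Fq)) :
    aeval (x - y) (C b) = aeval x (C b) - aeval y (C b) := by
  have h := hC.aeval_add b (x - y) y
  rw [sub_add_cancel] at h
  exact eq_sub_of_add_eq h.symm

end IsCarlitz

section Phi

set_option linter.unusedSectionVars false

variable {Fq : Type} [Field Fq] [Fintype Fq] {C : Polynomial Fq → Polynomial (RatFunc Fq)}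
  (hC : IsCarlitz Fq C)
include hC

theorem carlitz_phi_mul (b c : Polynomial Fq) (lam : AlgebraicClosure (RatFunc Fq)) :
    aeval lam (C (b * c)) = aeval (aeval lam (C c)) (C b) := by
  rw [hC.carlitz_mul, aeval_comp]

theorem carlitz_phi_sub (b c : Polynomial Fq) (lam : AlgebraicClosure (RatFunc Fq)) :
    aeval lam (C (b - c)) = aeval lam (C b) - aeval lam (C c) := by
  have h : C b = C (b - c) + C c := by rw [← hC.carlitz_add, sub_add_cancel]
  have h2 := congrArg (aeval lam) h
  rw [map_add] at h2
  exact eq_sub_of_add_eq h2.symm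

theorem carlitz_phi_root {a : Polynomial Fq} {lam : AlgebraicClosure (RatFunc Fq)}
    (h0 : aeval lam (C a) = 0) (b : Polynomial Fq) :
    aeval (aeval lam (C b)) (C a) = 0 := by
  rw [← carlitz_phi_mul hC, mul_comm, carlitz_phi_mul hC, h0, hC.aeval_zero']

end Phi

section Ker

set_option linter.unusedSectionVars false

variable {Fq : Type} [Field Fq] [Fintype Fq] {C : Polynomial Fq → Polynomial (RatFunc Fq)}
  (hC : IsCarlitz Fq C)
include hC

theorem carlitz_ker {a : Polynomial Fq} (ha : 0 < a.degree)
    {lam : AlgebraicClosure (RatFunc Fq)} (hlam : IsCarlitzGenerator Fq C a lam)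
    (b : Polynomial Fq) :
    aeval lam (C b) = 0 ↔ a ∣ b := by
  have ha0 : a ≠ 0 := fun h => by simp [h] at ha
  let I : Ideal (Polynomial Fq) :=
    { carrier := {c | aeval lam (C c) = 0}
      add_mem' := fun {x y} hx hy => by
        simp only [Set.mem_setOf_eq] at *
        rw [hC.carlitz_add, map_add, hx, hy, add_zero]
      zero_mem' := by simp [hC.zero]
      smul_mem' := fun c x hx => by
        simp only [smul_eq_mul, Set.mem_setOf_eq] at *
        rw [carlitz_phi_mul hC, hx, hC.aeval_zero'] }
  have hmemI : ∀ c, c ∈ I ↔ aeval lam (C c) = 0 := fun c => Iff.rfl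
  obtain ⟨d₀, hd₀⟩ := (IsPrincipalIdealRing.principal I).principal
  have haI : a ∈ I := (hmemI a).mpr hlam.1
  have hd₀0 : d₀ ≠ 0 := by
    rintro rfl
    rw [hd₀, Submodule.span_zero_singleton] at haI
    exact ha0 (by simpa using haI)
  set d : Polynomial Fq := d₀ * Polynomial.C (d₀.leadingCoeff)⁻¹ with hddef
  have hmonic : d.Monic := monic_mul_leadingCoeff_inv hd₀0
  have hd0 : d ≠ 0 := hmonic.ne_zero
  have hu : IsUnit (Polynomial.C (d₀.leadingCoeff)⁻¹) :=
    Polynomial.isUnit_C.mpr (isUnit_iff_ne_zero.mpr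
      (inv_ne_zero (leadingCoeff_ne_zero.mpr hd₀0)))
  have hspan : I = Ideal.span {d} := by
    rw [hd₀]
    exact Ideal.span_singleton_eq_span_singleton.mpr ⟨hu.unit, by rw [IsUnit.unit_spec]⟩
  have hmem : ∀ c, c ∈ I ↔ d ∣ c := fun c => by rw [hspan, Ideal.mem_span_singleton]
  have hda : d ∣ a := (hmem a).mp haI
  have hCa0 : C a ≠ 0 := hC.C_ne_zero ha0
  have hsep : (C a).Separable := hC.separable ha0
  have hcard1 : Nat.card ((C a).rootSet (AlgebraicClosure (RatFunc Fq)))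
      = Fintype.card Fq ^ a.natDegree := by
    rw [Nat.card_eq_fintype_card,
      card_rootSet_eq_natDegree hsep (IsAlgClosed.splits _), hC.natDegree_eq ha0]
  let e : degreeLT Fq d.natDegree → ((C a).rootSet (AlgebraicClosure (RatFunc Fq))) := fun c =>
    ⟨aeval lam (C c.1), by
      rw [mem_rootSet]
      exact ⟨hCa0, carlitz_phi_root hC hlam.1 c.1⟩⟩
  have hdegd : d.degree = (d.natDegree : WithBot ℕ) := degree_eq_natDegree hd0
  have hbij : Function.Bijective e := by
    constructor
    · rintro ⟨b₁, hb₁⟩ ⟨b₂, hb₂⟩ hEq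
      have h12 : aeval lam (C b₁) = aeval lam (C b₂) := congrArg Subtype.val hEq
      have hz : aeval lam (C (b₁ - b₂)) = 0 := by
        rw [carlitz_phi_sub hC, h12, sub_self]
      have hdvd : d ∣ (b₁ - b₂) := (hmem _).mp ((hmemI _).mpr hz)
      have hdeg : (b₁ - b₂).degree < d.degree := by
        rw [hdegd]
        exact lt_of_le_of_lt (degree_sub_le _ _)
          (max_lt (mem_degreeLT.mp hb₁) (mem_degreeLT.mp hb₂))
      exact Subtype.ext (sub_eq_zero.mp (Polynomial.eq_zero_of_dvd_of_degree_lt hdvd hdeg))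
    · rintro ⟨μ, hμ⟩
      rw [mem_rootSet] at hμ
      obtain ⟨c, hc⟩ := hlam.2 μ hμ.2
      refine ⟨⟨c %ₘ d, ?_⟩, ?_⟩
      · rw [mem_degreeLT, ← hdegd]
        exact degree_modByMonic_lt c hmonic
      · apply Subtype.ext
        show aeval lam (C (c %ₘ d)) = μ
        have hsplitc : c %ₘ d + d * (c /ₘ d) = c := modByMonic_add_div c d
        have hdI : aeval lam (C d) = 0 := (hmemI d).mp ((hmem d).mpr dvd_rfl)
        have hz : aeval lam (C (d * (c /ₘ d))) = 0 := by
          rw [mul_comm, carlitz_phi_mul hC, hdI, hC.aeval_zero']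
        have hcc : aeval lam (C c) = aeval lam (C (c %ₘ d)) + aeval lam (C (d * (c /ₘ d))) := by
          conv_lhs => rw [← hsplitc]
          rw [hC.carlitz_add, map_add]
        rw [hc, hcc, hz, add_zero]
  have hcard2 : Nat.card (degreeLT Fq d.natDegree) = Fintype.card Fq ^ d.natDegree := by
    rw [Nat.card_congr (Polynomial.degreeLTEquiv Fq d.natDegree).toEquiv]
    simp [Nat.card_eq_fintype_card]
  have hn : d.natDegree = a.natDegree := by
    have hcards := Nat.card_congr (Equiv.ofBijective e hbij)
    rw [hcard2, hcard1] at hcards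
    exact Nat.pow_right_injective Fintype.one_lt_card hcards
  have had : a ∣ d := by
    obtain ⟨c, hc⟩ := hda
    have hc0 : c ≠ 0 := by rintro rfl; rw [mul_zero] at hc; exact ha0 hc
    have hcdeg : c.natDegree = 0 := by
      have hmul := natDegree_mul hd0 hc0
      rw [← hc] at hmul
      omega
    have hcu : IsUnit c := isUnit_iff_degree_eq_zero.mpr (by
      rw [degree_eq_natDegree hc0, hcdeg]; rfl)
    refine ⟨(hcu.unit⁻¹ : (Polynomial Fq)ˣ), ?_⟩
    rw [hc, mul_assoc, hcu.mul_val_inv, mul_one]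
  constructor
  · intro hb
    exact dvd_trans had ((hmem b).mp ((hmemI b).mpr hb))
  · rintro ⟨c, rfl⟩
    rw [mul_comm, carlitz_phi_mul hC, hlam.1, hC.aeval_zero']

end Ker

theorem carlitz_splitting_field_galois_embedding (Fq : Type) [Field Fq] [Fintype Fq]
    (C : Polynomial Fq → Polynomial (RatFunc Fq)) (hC : IsCarlitz Fq C)
    (a : Polynomial Fq) (ha : 0 < a.degree)
    (K : IntermediateField (RatFunc Fq) (AlgebraicClosure (RatFunc Fq)))
    [FiniteDimensional (RatFunc Fq) K] [Algebra.IsSeparable (RatFunc Fq) K]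
    (m : K)
    (L : IntermediateField K (AlgebraicClosure (RatFunc Fq)))
    (hLdef : L = IntermediateField.adjoin K
      ((((C a).map (algebraMap (RatFunc Fq) K)) - Polynomial.C m).rootSet (AlgebraicClosure (RatFunc Fq))))
    (lam : AlgebraicClosure (RatFunc Fq)) (hlam : IsCarlitzGenerator Fq C a lam)
    (h : AlgebraicClosure (RatFunc Fq)) (hh : aeval h (C a) = algebraMap K (AlgebraicClosure (RatFunc Fq)) m) :
    L = IntermediateField.adjoin K {lam, h} ∧
    ∃ (hlm : lam ∈ L) (hhm : h ∈ L)
      (Ψ : (L ≃ₐ[K] L) →* Matrix.GeneralLinearGroup (Fin 2) (Polynomial Fq ⧸ Ideal.span {a})),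
      Function.Injective Ψ ∧
      ∀ ψ : L ≃ₐ[K] L, ∃ b u : Polynomial Fq,
        IsUnit (Ideal.Quotient.mk (Ideal.span {a}) b) ∧
        (↑(ψ ⟨lam, hlm⟩) : AlgebraicClosure (RatFunc Fq)) = aeval lam (C b) ∧
        (↑(ψ ⟨h, hhm⟩) : AlgebraicClosure (RatFunc Fq)) = aeval lam (C u) + h ∧
        (Ψ ψ : Matrix (Fin 2) (Fin 2) (Polynomial Fq ⧸ Ideal.span {a})) =
          !![Ideal.Quotient.mk (Ideal.span {a}) b, Ideal.Quotient.mk (Ideal.span {a}) u; 0, 1] := by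
  classical
  have ha0 : a ≠ 0 := fun h0 => by simp [h0] at ha
  set P : Polynomial K :=
    ((C a).map (algebraMap (RatFunc Fq) K)) - Polynomial.C m with hPdef
  -- evaluation of P
  have hPeval : ∀ x : AlgebraicClosure (RatFunc Fq),
      aeval x P = aeval x (C a) - algebraMap K (AlgebraicClosure (RatFunc Fq)) m := by
    intro x
    rw [hPdef, map_sub, aeval_map_algebraMap, aeval_C]
  -- P ≠ 0
  have hane : a.natDegree ≠ 0 := fun h0 =>
    (natDegree_pos_iff_degree_pos.mpr ha).ne' h0
  have hPne : P ≠ 0 := by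
    intro h0
    have h1 : ((C a).map (algebraMap (RatFunc Fq) K)) = Polynomial.C m :=
      sub_eq_zero.mp h0
    have h2 := congrArg natDegree h1
    rw [natDegree_map_eq_of_injective (algebraMap (RatFunc Fq) K).injective,
      natDegree_C, hC.natDegree_eq ha0] at h2
    have h3 : 2 ≤ Fintype.card Fq ^ a.natDegree := by
      calc 2 ≤ Fintype.card Fq := Fintype.one_lt_card
        _ = Fintype.card Fq ^ 1 := (pow_one _).symm
        _ ≤ Fintype.card Fq ^ a.natDegree :=
            Nat.pow_le_pow_right (Nat.le_of_lt Fintype.one_lt_card) (by omega)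
    omega
  -- root set description
  have hroot_iff : ∀ x : AlgebraicClosure (RatFunc Fq),
      x ∈ P.rootSet (AlgebraicClosure (RatFunc Fq)) ↔
        aeval x (C a) = algebraMap K (AlgebraicClosure (RatFunc Fq)) m := by
    intro x
    rw [mem_rootSet, hPeval]
    constructor
    · exact fun hx => sub_eq_zero.mp hx.2
    · exact fun hx => ⟨hPne, by rw [hx, sub_self]⟩
  -- kernel
  have hker : ∀ b : Polynomial Fq, aeval lam (C b) = 0 ↔ a ∣ b := carlitz_ker hC ha hlam
  have hphi1 : aeval lam (C 1) = lam := by rw [hC.one, aeval_X]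
  have hkey : ∀ b c : Polynomial Fq, aeval lam (C b) = aeval lam (C c) ↔
      Ideal.Quotient.mk (Ideal.span {a}) b = Ideal.Quotient.mk (Ideal.span {a}) c := by
    intro b c
    calc aeval lam (C b) = aeval lam (C c) ↔ aeval lam (C (b - c)) = 0 := by
          rw [carlitz_phi_sub hC, sub_eq_zero]
      _ ↔ a ∣ b - c := hker _
      _ ↔ _ := by rw [Ideal.Quotient.eq, Ideal.mem_span_singleton]
  -- roots of P
  have hroots : ∀ b : Polynomial Fq,
      aeval (aeval lam (C b) + h) (C a) = algebraMap K (AlgebraicClosure (RatFunc Fq)) m := by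
    intro b
    rw [hC.aeval_add, carlitz_phi_root hC hlam.1 b, hh, zero_add]
  have hLsub : ∀ x ∈ P.rootSet (AlgebraicClosure (RatFunc Fq)), x ∈ L := by
    intro x hx
    rw [hLdef]
    exact IntermediateField.subset_adjoin _ _ hx
  have hhm : h ∈ L := hLsub h ((hroot_iff h).mpr hh)
  have hphimem : ∀ b : Polynomial Fq, aeval lam (C b) ∈ L := by
    intro b
    have h1 : aeval lam (C b) + h ∈ L := hLsub _ ((hroot_iff _).mpr (hroots b))
    have h2 := sub_mem h1 hhm
    rwa [add_sub_cancel_right] at h2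
  have hlm : lam ∈ L := by
    have := hphimem 1
    rwa [hphi1] at this
  -- membership of aeval in intermediate fields
  have haevalmem : ∀ (F : IntermediateField K (AlgebraicClosure (RatFunc Fq)))
      {x : AlgebraicClosure (RatFunc Fq)} (hx : x ∈ F) (b : Polynomial Fq),
      aeval x (C b) ∈ F := by
    intro F x hx b
    have h1 : aeval x (C b)
        = algebraMap F (AlgebraicClosure (RatFunc Fq))
            (aeval (⟨x, hx⟩ : F) ((C b).map (algebraMap (RatFunc Fq) K))) := by
      rw [← Polynomial.aeval_algebraMap_apply]
      rw [show algebraMap F (AlgebraicClosure (RatFunc Fq)) (⟨x, hx⟩ : F) = x from rfl]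
      rw [aeval_map_algebraMap]
    rw [h1]
    exact (aeval (⟨x, hx⟩ : F) ((C b).map (algebraMap (RatFunc Fq) K))).2
  -- first conjunct
  have hLeq : L = IntermediateField.adjoin K {lam, h} := by
    apply le_antisymm
    · rw [hLdef]
      apply (IntermediateField.adjoin_le_iff).mpr
      intro x hx
      have hxroot := (hroot_iff x).mp hx
      have hxl : aeval (x - h) (C a) = 0 := by
        rw [hC.aeval_sub, hxroot, hh, sub_self]
      obtain ⟨b, hb⟩ := hlam.2 _ hxl
      have hxe : x = aeval lam (C b) + h := by
        rw [← hb, sub_add_cancel]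
      rw [hxe]
      have hlmem : lam ∈ IntermediateField.adjoin K {lam, h} :=
        IntermediateField.subset_adjoin _ _ (Set.mem_insert _ _)
      have hhmem : h ∈ IntermediateField.adjoin K {lam, h} :=
        IntermediateField.subset_adjoin _ _ (Set.mem_insert_of_mem _ rfl)
      exact add_mem (haevalmem _ hlmem b) hhmem
    · apply (IntermediateField.adjoin_le_iff).mpr
      intro x hx
      rcases hx with rfl | hx
      · exact hlm
      · rw [Set.mem_singleton_iff] at hx
        rw [hx]
        exact hhm
  refine ⟨hLeq, hlm, hhm, ?_⟩
  -- coercion of aeval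
  have hcoe : ∀ (y : L) (p : Polynomial K),
      ((aeval y p : L) : AlgebraicClosure (RatFunc Fq)) = aeval (y : AlgebraicClosure (RatFunc Fq)) p := by
    intro y p
    rw [show ((aeval y p : L) : AlgebraicClosure (RatFunc Fq))
        = algebraMap L (AlgebraicClosure (RatFunc Fq)) (aeval y p) from rfl,
      ← Polynomial.aeval_algebraMap_apply]
    rfl
  -- commuting lemma
  have hcomm : ∀ (ψ : L ≃ₐ[K] L) {x : AlgebraicClosure (RatFunc Fq)} (hx : x ∈ L)
      (b : Polynomial Fq) (hmem2 : aeval x (C b) ∈ L),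
      (↑(ψ ⟨aeval x (C b), hmem2⟩) : AlgebraicClosure (RatFunc Fq))
        = aeval (↑(ψ ⟨x, hx⟩) : AlgebraicClosure (RatFunc Fq)) (C b) := by
    intro ψ x hx b hmem2
    have h1 : (⟨aeval x (C b), hmem2⟩ : L)
        = aeval (⟨x, hx⟩ : L) ((C b).map (algebraMap (RatFunc Fq) K)) := by
      apply Subtype.ext
      rw [hcoe]
      rw [show ((⟨x, hx⟩ : L) : AlgebraicClosure (RatFunc Fq)) = x from rfl,
        aeval_map_algebraMap]
    rw [h1, ← Polynomial.aeval_algHom_apply ψ, hcoe, aeval_map_algebraMap]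
  -- existence of b and u
  have hψlam : ∀ ψ : L ≃ₐ[K] L, ∃ b : Polynomial Fq,
      (↑(ψ ⟨lam, hlm⟩) : AlgebraicClosure (RatFunc Fq)) = aeval lam (C b) := by
    intro ψ
    apply hlam.2
    have h1 : aeval (⟨lam, hlm⟩ : L) ((C a).map (algebraMap (RatFunc Fq) K)) = 0 := by
      apply Subtype.ext
      rw [hcoe]
      rw [show ((⟨lam, hlm⟩ : L) : AlgebraicClosure (RatFunc Fq)) = lam from rfl,
        aeval_map_algebraMap, hlam.1]
      rfl
    have h2 := congrArg ψ h1
    rw [← Polynomial.aeval_algHom_apply ψ, map_zero] at h2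
    have h3 := congrArg (fun z : L => (z : AlgebraicClosure (RatFunc Fq))) h2
    rw [hcoe, aeval_map_algebraMap] at h3
    simpa using h3
  have hψh : ∀ ψ : L ≃ₐ[K] L, ∃ u : Polynomial Fq,
      (↑(ψ ⟨h, hhm⟩) : AlgebraicClosure (RatFunc Fq)) = aeval lam (C u) + h := by
    intro ψ
    have h1 : aeval (↑(ψ ⟨h, hhm⟩) : AlgebraicClosure (RatFunc Fq)) (C a)
        = algebraMap K (AlgebraicClosure (RatFunc Fq)) m := by
      have h2 : aeval (⟨h, hhm⟩ : L) P = 0 := by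
        apply Subtype.ext
        rw [hcoe]
        rw [show ((⟨h, hhm⟩ : L) : AlgebraicClosure (RatFunc Fq)) = h from rfl, hPeval, hh,
          sub_self]
        rfl
      have h3 := congrArg ψ h2
      rw [← Polynomial.aeval_algHom_apply ψ, map_zero] at h3
      have h4 := congrArg (fun z : L => (z : AlgebraicClosure (RatFunc Fq))) h3
      rw [hcoe, hPeval] at h4
      rw [show ((0 : L) : AlgebraicClosure (RatFunc Fq)) = 0 from rfl] at h4
      exact sub_eq_zero.mp h4
    have h6 : aeval ((↑(ψ ⟨h, hhm⟩) : AlgebraicClosure (RatFunc Fq)) - h) (C a) = 0 := by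
      rw [hC.aeval_sub, h1, hh, sub_self]
    obtain ⟨u, hu⟩ := hlam.2 _ h6
    exact ⟨u, by rw [← hu, sub_add_cancel]⟩
  -- chosen data
  set Bf : (L ≃ₐ[K] L) → Polynomial Fq := fun ψ => (hψlam ψ).choose with hBfdef
  set Uf : (L ≃ₐ[K] L) → Polynomial Fq := fun ψ => (hψh ψ).choose with hUfdef
  have hB : ∀ ψ : L ≃ₐ[K] L,
      (↑(ψ ⟨lam, hlm⟩) : AlgebraicClosure (RatFunc Fq)) = aeval lam (C (Bf ψ)) :=
    fun ψ => (hψlam ψ).choose_spec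
  have hU : ∀ ψ : L ≃ₐ[K] L,
      (↑(ψ ⟨h, hhm⟩) : AlgebraicClosure (RatFunc Fq)) = aeval lam (C (Uf ψ)) + h :=
    fun ψ => (hψh ψ).choose_spec
  -- multiplicativity data
  have hmul_lam : ∀ ψ χ : L ≃ₐ[K] L,
      aeval lam (C (Bf (ψ * χ))) = aeval lam (C (Bf χ * Bf ψ)) := by
    intro ψ χ
    rw [← hB (ψ * χ)]
    have h1 : (ψ * χ) ⟨lam, hlm⟩ = ψ (χ ⟨lam, hlm⟩) := AlgEquiv.mul_apply ψ χ _
    have h2 : χ ⟨lam, hlm⟩ = ⟨aeval lam (C (Bf χ)), hphimem _⟩ := Subtype.ext (hB χ)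
    rw [h1, h2, hcomm ψ hlm (Bf χ) (hphimem _), hB ψ, ← carlitz_phi_mul hC]
  have hmul_h : ∀ ψ χ : L ≃ₐ[K] L,
      aeval lam (C (Uf (ψ * χ))) = aeval lam (C (Uf χ * Bf ψ + Uf ψ)) := by
    intro ψ χ
    have h1 : (ψ * χ) ⟨h, hhm⟩ = ψ (χ ⟨h, hhm⟩) := AlgEquiv.mul_apply ψ χ _
    have h2 : χ ⟨h, hhm⟩ = ⟨aeval lam (C (Uf χ)), hphimem _⟩ + ⟨h, hhm⟩ := by
      apply Subtype.ext
      rw [hU χ]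
      rfl
    have h3 : (↑((ψ * χ) ⟨h, hhm⟩) : AlgebraicClosure (RatFunc Fq))
        = aeval lam (C (Uf χ * Bf ψ)) + (aeval lam (C (Uf ψ)) + h) := by
      rw [h1, h2, map_add]
      push_cast
      rw [hcomm ψ hlm (Uf χ) (hphimem _), hB ψ, ← carlitz_phi_mul hC, hU ψ]
    rw [hC.carlitz_add (Uf χ * Bf ψ) (Uf ψ), map_add]
    have h4 := hU (ψ * χ)
    rw [h3] at h4
    rw [← add_assoc] at h4
    exact (add_right_cancel h4).symm
  -- units
  have hBunit : ∀ ψ : L ≃ₐ[K] L, IsUnit (Ideal.Quotient.mk (Ideal.span {a}) (Bf ψ)) := by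
    intro ψ
    have h2 : ψ (ψ⁻¹ ⟨lam, hlm⟩) = ⟨lam, hlm⟩ := by
      rw [← AlgEquiv.mul_apply, mul_inv_cancel, AlgEquiv.one_apply]
    have h3 : (⟨aeval lam (C (Bf ψ⁻¹)), hphimem _⟩ : L) = ψ⁻¹ ⟨lam, hlm⟩ :=
      Subtype.ext (hB ψ⁻¹).symm
    have h4 := hcomm ψ hlm (Bf ψ⁻¹) (hphimem _)
    rw [h3, h2, hB ψ, ← carlitz_phi_mul hC] at h4
    have h5 : aeval lam (C 1) = aeval lam (C (Bf ψ⁻¹ * Bf ψ)) := by rw [hphi1]; exact h4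
    have h6 := (hkey _ _).mp h5
    rw [map_one, map_mul] at h6
    exact IsUnit.of_mul_eq_one _ (by rw [mul_comm]; exact h6.symm)
  -- the matrix map
  set M : (L ≃ₐ[K] L) → Matrix (Fin 2) (Fin 2) (Polynomial Fq ⧸ Ideal.span {a}) :=
    fun ψ => !![Ideal.Quotient.mk (Ideal.span {a}) (Bf ψ),
      Ideal.Quotient.mk (Ideal.span {a}) (Uf ψ); 0, 1] with hMdef
  have hdet : ∀ ψ : L ≃ₐ[K] L, IsUnit (M ψ).det := by
    intro ψ
    rw [hMdef]
    simp only [Matrix.det_fin_two_of, mul_one, mul_zero, sub_zero]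
    exact hBunit ψ
  have hMmul : ∀ ψ χ : L ≃ₐ[K] L, M (ψ * χ) = M ψ * M χ := by
    intro ψ χ
    have hb : Ideal.Quotient.mk (Ideal.span {a}) (Bf (ψ * χ))
        = Ideal.Quotient.mk (Ideal.span {a}) (Bf χ * Bf ψ) := (hkey _ _).mp (hmul_lam ψ χ)
    have hu2 : Ideal.Quotient.mk (Ideal.span {a}) (Uf (ψ * χ))
        = Ideal.Quotient.mk (Ideal.span {a}) (Uf χ * Bf ψ + Uf ψ) := (hkey _ _).mp (hmul_h ψ χ)
    rw [hMdef]
    simp only [Matrix.mul_fin_two]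
    rw [hb, hu2]
    simp only [map_mul, map_add]
    congr 1 <;> ring_nf
  -- the group homomorphism
  set Psi0 : (L ≃ₐ[K] L) → Matrix.GeneralLinearGroup (Fin 2) (Polynomial Fq ⧸ Ideal.span {a}) :=
    fun ψ => Matrix.nonsingInvUnit (M ψ) (hdet ψ) with hPsi0def
  have hPsi0val : ∀ ψ : L ≃ₐ[K] L, ((Psi0 ψ : Matrix.GeneralLinearGroup (Fin 2)
      (Polynomial Fq ⧸ Ideal.span {a})) : Matrix (Fin 2) (Fin 2) (Polynomial Fq ⧸ Ideal.span {a}))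
      = M ψ := fun ψ => rfl
  set Psi : (L ≃ₐ[K] L) →* Matrix.GeneralLinearGroup (Fin 2) (Polynomial Fq ⧸ Ideal.span {a}) :=
    MonoidHom.mk' Psi0 (fun ψ χ => Units.ext (by
      rw [hPsi0val (ψ * χ), hMmul]
      rfl)) with hPsidef
  refine ⟨Psi, ?_, ?_⟩
  · -- injectivity
    rw [injective_iff_map_eq_one]
    intro ψ hψ1
    have hval : M ψ = 1 := congrArg Units.val hψ1
    have h00 : Ideal.Quotient.mk (Ideal.span {a}) (Bf ψ) = 1 := by
      have := congr_fun (congr_fun hval 0) 0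
      simpa [hMdef, Matrix.one_apply] using this
    have h01 : Ideal.Quotient.mk (Ideal.span {a}) (Uf ψ) = 0 := by
      have := congr_fun (congr_fun hval 0) 1
      simpa [hMdef, Matrix.one_apply] using this
    have hfixlam : (↑(ψ ⟨lam, hlm⟩) : AlgebraicClosure (RatFunc Fq)) = lam := by
      rw [hB ψ]
      have : aeval lam (C (Bf ψ)) = aeval lam (C 1) := (hkey _ _).mpr (by rw [map_one, h00])
      rw [this, hphi1]
    have hfixh : (↑(ψ ⟨h, hhm⟩) : AlgebraicClosure (RatFunc Fq)) = h := by
      rw [hU ψ]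
      have : aeval lam (C (Uf ψ)) = aeval lam (C 0) := (hkey _ _).mpr (by rw [map_zero, h01])
      rw [this, hC.zero, map_zero, zero_add]
    have hext : (L.val.comp ψ.toAlgHom) = L.val := by
      apply IntermediateField.algHom_ext_of_eq_adjoin K hLeq
      intro x hx
      rcases hx with rfl | hx
      · exact hfixlam
      · rw [Set.mem_singleton_iff] at hx
        subst hx
        exact hfixh
    apply AlgEquiv.ext
    intro x
    have := congrArg (fun f : L →ₐ[K] (AlgebraicClosure (RatFunc Fq)) => f x) hext
    exact Subtype.ext this
  · -- description
    intro ψ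
    exact ⟨Bf ψ, Uf ψ, hBunit ψ, hB ψ, hU ψ, hPsi0val ψ⟩
end

section
/- Let a = ε P_1^{e_1} ⋯ P_n^{e_n} ∈ A = F_q[T] with ε ∈ F_q^× and distinct monic primes P_i, and set a_i = a / P_i^{e_i}. Suppose K is a field extension of k = F_q(T), m ∈ K, h ∈ k^alg satisfies C_a(h) = m, λ_a generates Λ_a, and for each i there is b_i ∈ A with C_{a_i}(C_{b_i}(λ_a) + h) ∈ K. Then the element x = C_ε(λ_a) + h, where ε ∈ A is chosen by the Chinese Remainder Theorem so that ε ≡ b_i (mod P_i^{e_i}) for all i, satisfies C_{a_i}(x) = C_{a_i}(C_{b_i}(λ_a) + h) for each i, lies in K, and satisfies C_a(x) = m. -/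
set_option maxHeartbeats 1000000
set_option synthInstance.maxHeartbeats 1000000

open Polynomial IsDedekindDomain

section Helpers

open Polynomial

variable {Fq : Type} [Field Fq] [Fintype Fq]
  {C : Polynomial Fq → Polynomial (RatFunc Fq)} (hC : IsCarlitz Fq C)

lemma carlitz_charP' : ∃ p : ℕ, p.Prime ∧ CharP (AlgebraicClosure (RatFunc Fq)) p ∧
    ∃ k : ℕ, Fintype.card Fq = p ^ k := by
  obtain ⟨k, hp, hcard⟩ := FiniteField.card Fq (ringChar Fq)
  refine ⟨ringChar Fq, hp, ?_, k, hcard⟩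
  have h1 : CharP (RatFunc Fq) (ringChar Fq) :=
    charP_of_injective_algebraMap (algebraMap Fq (RatFunc Fq)).injective _
  exact charP_of_injective_algebraMap
    (algebraMap (RatFunc Fq) (AlgebraicClosure (RatFunc Fq))).injective _

include hC in
lemma carlitz_aeval_add (c : Polynomial Fq) (x y : AlgebraicClosure (RatFunc Fq)) :
    aeval (x + y) (C c) = aeval x (C c) + aeval y (C c) := by
  obtain ⟨p, hp, hchar, k, hcard⟩ := carlitz_charP' (Fq := Fq)
  have : Fact p.Prime := ⟨hp⟩
  have hX : ∀ u v : AlgebraicClosure (RatFunc Fq),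
      aeval (u + v) (C X) = aeval u (C X) + aeval v (C X) := by
    intro u v
    rw [hC.carlitz_X]
    simp only [map_add, map_mul, map_pow, aeval_X, aeval_C, hcard]
    rw [add_pow_char_pow]
    ring
  induction c using Polynomial.induction_on generalizing x y with
  | C a => rw [hC.carlitz_const]; simp [mul_add]
  | add u v hu hv => rw [hC.carlitz_add]; simp only [map_add, hu, hv]; ring
  | monomial n a ih =>
    have he : Polynomial.C a * X ^ (n + 1) = (Polynomial.C a * X ^ n) * X := by ring
    rw [he, hC.carlitz_mul, aeval_comp, aeval_comp, aeval_comp, hX, ih]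

include hC in
lemma carlitz_aeval_zero (c : Polynomial Fq) :
    aeval (0 : AlgebraicClosure (RatFunc Fq)) (C c) = 0 := by
  have := carlitz_aeval_add hC c 0 0
  rw [add_zero] at this
  exact (add_left_cancel (a := aeval (0 : AlgebraicClosure (RatFunc Fq)) (C c))
    (by rw [add_zero]; exact this.symm))

include hC in
lemma carlitz_one' : C 1 = X := by
  have := hC.carlitz_const 1
  simpa using this

include hC in
lemma carlitz_aeval_mul (u v : Polynomial Fq) (x : AlgebraicClosure (RatFunc Fq)) :
    aeval x (C (u * v)) = aeval (aeval x (C v)) (C u) := by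
  rw [hC.carlitz_mul, aeval_comp]

lemma bezout_ai {Fq : Type} [Field Fq] [Fintype Fq]
    (n : ℕ) (hn : 0 < n) (P : Fin n → Polynomial Fq) (e : Fin n → ℕ)
    (hP : ∀ i, (P i).Monic ∧ Prime (P i)) (hPdist : Function.Injective P)
    (eps : Fq) (heps : eps ≠ 0)
    (a : Polynomial Fq) (hadef : a = Polynomial.C eps * ∏ i, P i ^ e i)
    (ai : Fin n → Polynomial Fq) (hai : ∀ i, a = ai i * P i ^ e i) :
    ∃ υ : Fin n → Polynomial Fq, ∑ i, υ i * ai i = 1 := by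
  have haifor : ∀ i, ai i = Polynomial.C eps * ∏ j ∈ Finset.univ.erase i, P j ^ e j := by
    intro i
    have hP0 : (P i) ^ (e i) ≠ 0 := pow_ne_zero _ (hP i).2.ne_zero
    apply mul_right_cancel₀ hP0
    rw [← hai i, hadef, ← Finset.mul_prod_erase Finset.univ _ (Finset.mem_univ i)]
    ring
  have hspan : Ideal.span (Set.range ai) = ⊤ := by
    by_contra hne
    obtain ⟨M, hMmax, hle⟩ := Ideal.exists_le_maximal _ hne
    obtain ⟨p, hpgen⟩ := (IsPrincipalIdealRing.principal M)
    have hdvd : ∀ i, p ∣ ai i := by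
      intro i
      have : ai i ∈ M := hle (Ideal.subset_span ⟨i, rfl⟩)
      rw [hpgen] at this
      exact Ideal.mem_span_singleton.mp this
    have hp0 : p ≠ 0 := by
      rintro rfl
      have := hdvd ⟨0, hn⟩
      rw [zero_dvd_iff] at this
      have h0 : ai ⟨0, hn⟩ ≠ 0 := by
        rw [haifor]
        exact mul_ne_zero (by simpa using heps)
          (Finset.prod_ne_zero_iff.mpr fun j _ => pow_ne_zero _ (hP j).2.ne_zero)
      exact h0 this
    have hpprime : Prime p := by
      have := hMmax.isPrime
      rw [hpgen] at this
      exact (Ideal.span_singleton_prime hp0).mp this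
    have key : ∀ i, ∃ j ∈ Finset.univ.erase i, Associated p (P j) := by
      intro i
      have h1 : p ∣ Polynomial.C eps * ∏ j ∈ Finset.univ.erase i, P j ^ e j :=
        haifor i ▸ hdvd i
      have h2 : p ∣ ∏ j ∈ Finset.univ.erase i, P j ^ e j := by
        rcases hpprime.2.2 _ _ h1 with h | h
        · exact absurd (isUnit_of_dvd_unit h (Polynomial.isUnit_C.mpr
            (isUnit_iff_ne_zero.mpr heps))) hpprime.not_unit
        · exact h
      obtain ⟨j, hj, hdj⟩ := hpprime.exists_mem_finset_dvd h2
      exact ⟨j, hj, hpprime.irreducible.associated_of_dvd (hP j).2.irreducible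
        (hpprime.dvd_of_dvd_pow hdj)⟩
    obtain ⟨j, hji, hj⟩ := key ⟨0, hn⟩
    obtain ⟨l, hlj, hl⟩ := key j
    have hPeq : P j = P l := eq_of_monic_of_associated (hP j).1 (hP l).1 (hj.symm.trans hl)
    exact (Finset.ne_of_mem_erase hlj) (hPdist hPeq).symm
  have h1 : (1 : Polynomial Fq) ∈ Ideal.span (Set.range ai) := hspan ▸ Submodule.mem_top
  rw [Ideal.span, Submodule.mem_span_range_iff_exists_fun] at h1
  obtain ⟨υ, hυ⟩ := h1
  exact ⟨υ, by simpa [smul_eq_mul] using hυ⟩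

end Helpers

theorem carlitz_crt_patching_solution (Fq : Type) [Field Fq] [Fintype Fq]
    (C : Polynomial Fq → Polynomial (RatFunc Fq)) (hC : IsCarlitz Fq C)
    (n : ℕ) (hn : 0 < n) (P : Fin n → Polynomial Fq) (e : Fin n → ℕ)
    (hP : ∀ i, (P i).Monic ∧ Prime (P i)) (hPdist : Function.Injective P)
    (he : ∀ i, 1 ≤ e i) (eps : Fq) (heps : eps ≠ 0)
    (a : Polynomial Fq) (hadef : a = Polynomial.C eps * ∏ i, P i ^ e i)
    (ai : Fin n → Polynomial Fq) (hai : ∀ i, a = ai i * P i ^ e i)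
    (K : IntermediateField (RatFunc Fq) (AlgebraicClosure (RatFunc Fq)))
    (m : K) (h : AlgebraicClosure (RatFunc Fq)) (hh : aeval h (C a) = algebraMap K (AlgebraicClosure (RatFunc Fq)) m)
    (lam : AlgebraicClosure (RatFunc Fq)) (hlam : IsCarlitzGenerator Fq C a lam)
    (b : Fin n → Polynomial Fq)
    (hb : ∀ i, aeval (aeval lam (C (b i)) + h) (C (ai i)) ∈ K)
    (eps' : Polynomial Fq) (hcrt : ∀ i, P i ^ e i ∣ (eps' - b i)) :
    (∀ i, aeval (aeval lam (C eps') + h) (C (ai i)) =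
        aeval (aeval lam (C (b i)) + h) (C (ai i))) ∧
    (aeval lam (C eps') + h) ∈ K ∧
    aeval (aeval lam (C eps') + h) (C a) = algebraMap K (AlgebraicClosure (RatFunc Fq)) m := by
  classical
  have hCsub : ∀ u v : Polynomial Fq, C (u - v) = C u - C v :=
    fun u v => map_sub (AddMonoidHom.mk' C hC.carlitz_add) u v
  have hCsum : ∀ f : Fin n → Polynomial Fq, C (∑ i, f i) = ∑ i, C (f i) :=
    fun f => map_sum (AddMonoidHom.mk' C hC.carlitz_add) f Finset.univ
  have htor : ∀ d : Polynomial Fq, a ∣ d → aeval lam (C d) = 0 := by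
    rintro d ⟨t, ht⟩
    rw [ht, mul_comm, carlitz_aeval_mul hC, hlam.1, carlitz_aeval_zero hC]
  have part1 : ∀ i, aeval (aeval lam (C eps') + h) (C (ai i)) =
      aeval (aeval lam (C (b i)) + h) (C (ai i)) := by
    intro i
    rw [carlitz_aeval_add hC, carlitz_aeval_add hC]
    congr 1
    rw [← carlitz_aeval_mul hC, ← carlitz_aeval_mul hC]
    obtain ⟨t, ht⟩ := hcrt i
    have hdvd : a ∣ ai i * eps' - ai i * b i := by
      refine ⟨t, ?_⟩
      rw [← mul_sub, ht, hai i]; ring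
    have h0 := htor _ hdvd
    rw [hCsub, map_sub] at h0
    exact sub_eq_zero.mp h0
  refine ⟨part1, ?_, ?_⟩
  · obtain ⟨υ, hυ⟩ := bezout_ai n hn P e hP hPdist eps heps a hadef ai hai
    set x := aeval lam (C eps') + h with hxdef
    have hx : x = ∑ i, aeval (aeval x (C (ai i))) (C (υ i)) := by
      have h1 : x = aeval x (C (∑ i, υ i * ai i)) := by
        rw [hυ, carlitz_one' hC, aeval_X]
      conv_lhs => rw [h1]
      rw [hCsum, map_sum]
      exact Finset.sum_congr rfl fun i _ => (carlitz_aeval_mul hC _ _ _)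
    rw [hx]
    refine sum_mem fun i _ => ?_
    have hmem : aeval x (C (ai i)) ∈ K := by rw [hxdef, part1 i]; exact hb i
    have e1 : (aeval x (C (ai i))) = algebraMap K (AlgebraicClosure (RatFunc Fq))
        (⟨aeval x (C (ai i)), hmem⟩ : K) := rfl
    rw [e1, aeval_algebraMap_apply, IntermediateField.algebraMap_apply]
    exact SetLike.coe_mem _
  · rw [carlitz_aeval_add hC, ← carlitz_aeval_mul hC,
      htor _ (dvd_mul_right a eps'), zero_add, hh]
end
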